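/- Let G be the 3×4 grid graph on vertex set {a,b,c,d,e,f,g,h,i,j,k,l} with edge set {ab, bc, cd, ef, fg, gh, ij, jk, kl, ae, bf, cg, dh, ei, fj, gk, hl} and vertex weights w(a) = w(c) = w(d) = w(e) = w(f) = w(h) = w(i) = w(k) = w(l) = 10 and w(b) = w(g) = w(j) = 1. Then the maximum of Σ_{v∈V'} w(v) over all subsets V' whose induced subgraph G[V'] is acyclic equals 90, while every subset V' whose induced subgraph G[V'] is a tree (connected and acyclic) satisfies Σ_{v∈V'} w(v) < 90. Hence the optimal values of the maximum weighted induced forest and the maximum weighted induced tree problems differ on G. -/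

import Mathlib

/-!
The total weight is `93`, so a vertex set missing one of the nine vertices of weight `10` weighs
at most `83`. Each of the three vertices of weight `1` closes a 4-cycle with three heavy vertices,
so the only induced forest containing all heavy vertices is the heavy set itself; it weighs `90`
and is disconnected, hence no induced tree reaches `90`.
-/

open Finset

/-- The 3×4 grid graph on `{a,...,l} = {0,...,11}` with edges
`ab, bc, cd, ef, fg, gh, ij, jk, kl, ae, bf, cg, dh, ei, fj, gk, hl`. -/
def exGraph14 : SimpleGraph (Fin 12) :=
  SimpleGraph.fromRel (fun u v =>
    (u, v) ∈ ([(0, 1), (1, 2), (2, 3), (4, 5), (5, 6), (6, 7), (8, 9), (9, 10),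
      (10, 11), (0, 4), (1, 5), (2, 6), (3, 7), (4, 8), (5, 9), (6, 10), (7, 11)] :
      List (Fin 12 × Fin 12)))

/-- Weights `w b = w g = w j = 1` and all other vertices have weight `10`. -/
def exWeight14 : Fin 12 → ℝ := ![10, 1, 10, 10, 10, 10, 1, 10, 10, 1, 10, 10]

instance SimpleGraph.instDecidableRelInduceAdj {V : Type*} {G : SimpleGraph V}
    [DecidableRel G.Adj] (s : Set V) : DecidableRel (G.induce s).Adj := fun u v =>
  inferInstanceAs (Decidable (G.Adj u v))

instance : DecidableRel exGraph14.Adj := fun u v =>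
  inferInstanceAs (Decidable (u ≠ v ∧ _))

namespace SimpleGraph

variable {V : Type*} {G : SimpleGraph V} {a b c d : V}

lemma not_isAcyclic_of_cycle4 (hab : G.Adj a b) (hbc : G.Adj b c) (hcd : G.Adj c d)
    (hda : G.Adj d a) (hac : a ≠ c) (hbd : b ≠ d) : ¬ G.IsAcyclic := fun hG => by
  refine hG (.cons hab (.cons hbc (.cons hcd (.cons hda .nil)))) ?_
  rw [Walk.isCycle_def, Walk.isTrail_def]
  refine ⟨?_, by simp, ?_⟩
  · simp [hab.ne, hbc.ne, hcd.ne, hda.ne, hab.ne', hda.ne', hac, hac.symm, hbd]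
  · simp [hab.ne', hbc.ne, hcd.ne, hda.ne, hac.symm, hbd]

lemma not_isAcyclic_induce_of_cycle4 {s : Set V} (ha : a ∈ s) (hb : b ∈ s) (hc : c ∈ s)
    (hd : d ∈ s) (hab : G.Adj a b) (hbc : G.Adj b c) (hcd : G.Adj c d) (hda : G.Adj d a)
    (hac : a ≠ c) (hbd : b ≠ d) : ¬ (G.induce s).IsAcyclic :=
  not_isAcyclic_of_cycle4 (a := ⟨a, ha⟩) (b := ⟨b, hb⟩) (c := ⟨c, hc⟩) (d := ⟨d, hd⟩)
    hab hbc hcd hda (by simpa using hac) (by simpa using hbd)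

end SimpleGraph

/-- The vertices of weight `10`; they induce the two trees `{a,e,f,i}` and `{c,d,h,k,l}`. -/
def exHeavy14 : Finset (Fin 12) := {0, 2, 3, 4, 5, 7, 8, 10, 11}

lemma exWeight14_nonneg (v : Fin 12) : 0 ≤ exWeight14 v := by
  fin_cases v <;> norm_num [exWeight14]

lemma exWeight14_of_mem_exHeavy14 {v : Fin 12} (hv : v ∈ exHeavy14) : exWeight14 v = 10 := by
  fin_cases hv <;> rfl

lemma sum_exWeight14_univ : ∑ v, exWeight14 v = 93 := by
  norm_num [Fin.sum_univ_succ, exWeight14]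

lemma sum_exWeight14_exHeavy14 : ∑ v ∈ exHeavy14, exWeight14 v = 90 := by
  rw [sum_congr rfl fun v hv => exWeight14_of_mem_exHeavy14 hv, sum_const, nsmul_eq_mul,
    show #exHeavy14 = 9 from rfl]
  norm_num

lemma isAcyclic_induce_exHeavy14 : (exGraph14.induce (exHeavy14 : Set (Fin 12))).IsAcyclic := by
  rw [SimpleGraph.isAcyclic_iff_forall_adj_isBridge]
  simp only [SimpleGraph.isBridge_iff]
  decide +kernel

lemma not_connected_induce_exHeavy14 :
    ¬ (exGraph14.induce (exHeavy14 : Set (Fin 12))).Connected := by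
  decide +kernel

lemma eq_exHeavy14_of_isAcyclic {V' : Finset (Fin 12)} (hsub : exHeavy14 ⊆ V')
    (hac : (exGraph14.induce (V' : Set (Fin 12))).IsAcyclic) : V' = exHeavy14 := by
  refine Subset.antisymm (fun v hv => ?_) hsub
  by_contra hvH
  have hv_light : v = 1 ∨ v = 6 ∨ v = 9 := by
    revert hvH; fin_cases v <;> decide
  -- `b`, `g`, `j` lie on the squares `bfea`, `gcdh`, `jief` respectively.
  rcases hv_light with rfl | rfl | rfl
  · refine SimpleGraph.not_isAcyclic_induce_of_cycle4 (b := 5) (c := 4) (d := 0) hv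
      ?_ ?_ ?_ ?_ ?_ ?_ ?_ ?_ ?_ hac <;> first | exact hsub (by decide) | decide
  · refine SimpleGraph.not_isAcyclic_induce_of_cycle4 (b := 2) (c := 3) (d := 7) hv
      ?_ ?_ ?_ ?_ ?_ ?_ ?_ ?_ ?_ hac <;> first | exact hsub (by decide) | decide
  · refine SimpleGraph.not_isAcyclic_induce_of_cycle4 (b := 8) (c := 4) (d := 5) hv
      ?_ ?_ ?_ ?_ ?_ ?_ ?_ ?_ ?_ hac <;> first | exact hsub (by decide) | decide

lemma sum_exWeight14_le_of_not_subset {V' : Finset (Fin 12)} (h : ¬ exHeavy14 ⊆ V') :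
    ∑ v ∈ V', exWeight14 v ≤ 83 := by
  obtain ⟨v, hvH, hv⟩ := not_subset.mp h
  have hle := sum_le_univ_sum_of_nonneg (s := insert v V') (fun u => exWeight14_nonneg u)
  rw [sum_insert hv, sum_exWeight14_univ, exWeight14_of_mem_exHeavy14 hvH] at hle
  linarith

lemma eq_exHeavy14_or_sum_le_of_isAcyclic {V' : Finset (Fin 12)}
    (hac : (exGraph14.induce (V' : Set (Fin 12))).IsAcyclic) :
    V' = exHeavy14 ∨ ∑ v ∈ V', exWeight14 v ≤ 83 := by
  by_cases hsub : exHeavy14 ⊆ V'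
  · exact .inl (eq_exHeavy14_of_isAcyclic hsub hac)
  · exact .inr (sum_exWeight14_le_of_not_subset hsub)

/-- On this grid graph the maximum weight of a subset inducing a forest is
`90`, while every subset inducing a tree has weight strictly less than `90`;
hence the MWIF and MWIT optima differ. -/
theorem mwif_ne_mwit_grid_example :
    IsGreatest {x : ℝ | ∃ V' : Finset (Fin 12),
      (exGraph14.induce (V' : Set (Fin 12))).IsAcyclic ∧
        x = ∑ v ∈ V', exWeight14 v} 90 ∧
    (∀ V' : Finset (Fin 12), (exGraph14.induce (V' : Set (Fin 12))).IsTree →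
      ∑ v ∈ V', exWeight14 v < 90) := by
  refine ⟨⟨⟨exHeavy14, isAcyclic_induce_exHeavy14, sum_exWeight14_exHeavy14.symm⟩, ?_⟩, ?_⟩
  · rintro x ⟨V', hac, rfl⟩
    rcases eq_exHeavy14_or_sum_le_of_isAcyclic hac with rfl | hle
    · exact sum_exWeight14_exHeavy14.le
    · linarith
  · intro V' htree
    rcases eq_exHeavy14_or_sum_le_of_isAcyclic htree.isAcyclic with rfl | hle
    · exact absurd htree.connected not_connected_induce_exHeavy14
    · linarith
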